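/- arXiv:2509.15420 — 5 statements merged into one kernel-verified Lean document; each statement's English description precedes it below -/
import Mathlib

section
/- (Separability lemma) Assume the minipatch ranking framework on the pool S = {1,…,M} satisfies Rank Consistency with parameter p, Unbiased Ordering, and Bounded Deviation with constant C. Define Δ = min over all pairs j, j' ∈ {1,…,M} with r_j < r_{j'} of μ_{j'} − μ_j. Then Δ > (2p − 1)·(m − 1)/(M − 1). -/
open MeasureTheory ProbabilityTheory Real
open scoped ENNReal Classical

noncomputable section

instance finsetMeasurableSpace {α : Type*} : MeasurableSpace (Finset α) := ⊤

/-- A random minipatch ranking on the pool `S ⊆ {1,…,M}`: `F` is uniformly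
distributed over the size-`m` subsets of `S`, and (pointwise, hence conditionally
on `F`) the ranks `rt j` for `j ∈ F` form a bijection from `F` onto `{0,…,m−1}`. -/
structure IsMinipatchRanking {Ω : Type*} [MeasurableSpace Ω] (μ : Measure Ω) {M : ℕ}
    (m : ℕ) (S : Finset (Fin M)) (F : Ω → Finset (Fin M)) (rt : Fin M → Ω → ℕ) : Prop where
  measF : Measurable F
  measRt : ∀ j, Measurable (rt j)
  subset : ∀ ω, F ω ⊆ S
  card_eq : ∀ ω, (F ω).card = m
  uniform : ∀ A : Finset (Fin M), A ⊆ S → A.card = m →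
    μ {ω | F ω = A} = ((S.card.choose m : ℝ≥0∞))⁻¹
  bij : ∀ ω, Set.BijOn (fun j => rt j ω) (F ω : Set (Fin M)) (Set.Iio m)

/-- `μ_j = E[r̃_j | j ∈ F]`. -/
def muRank {Ω : Type*} [MeasurableSpace Ω] (μ : Measure Ω) {M : ℕ}
    (F : Ω → Finset (Fin M)) (rt : Fin M → Ω → ℕ) (j : Fin M) : ℝ :=
  ∫ ω, (rt j ω : ℝ) ∂ μ[|{ω | j ∈ F ω}]

/-- Rank Consistency with parameter `p`. -/
def RankConsistency {Ω : Type*} [MeasurableSpace Ω] (μ : Measure Ω) {M : ℕ}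
    (r : Fin M → ℕ) (S : Finset (Fin M)) (F : Ω → Finset (Fin M))
    (rt : Fin M → Ω → ℕ) (p : ℝ) : Prop :=
  ∀ j ∈ S, ∀ j' ∈ S, r j < r j' →
    ENNReal.ofReal p ≤ μ[|{ω | j ∈ F ω ∧ j' ∈ F ω}] {ω | rt j ω < rt j' ω}

/-- Unbiased Ordering. -/
def UnbiasedOrdering {Ω : Type*} [MeasurableSpace Ω] (μ : Measure Ω) {M : ℕ}
    (r : Fin M → ℕ) (S : Finset (Fin M)) (F : Ω → Finset (Fin M))
    (rt : Fin M → Ω → ℕ) : Prop :=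
  ∀ j ∈ S, ∀ j' ∈ S, r j < r j' →
    (∫ ω, (rt j ω : ℝ) ∂ μ[|{ω | j ∈ F ω ∧ j' ∉ F ω}]) <
      ∫ ω, (rt j' ω : ℝ) ∂ μ[|{ω | j' ∈ F ω ∧ j ∉ F ω}]

/-- Bounded Deviation with constant `C`. -/
def BoundedDeviation {Ω : Type*} [MeasurableSpace Ω] (μ : Measure Ω) {M : ℕ}
    (r : Fin M → ℕ) (S : Finset (Fin M)) (F : Ω → Finset (Fin M))
    (rt : Fin M → Ω → ℕ) (C : ℝ) : Prop :=
  ∀ j ∈ S, ∀ j' ∈ S, r j < r j' →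
    μ {ω | (j ∈ F ω ∧ j' ∈ F ω) ∧ rt j ω < rt j' ω} ≠ 0 →
    μ {ω | (j ∈ F ω ∧ j' ∈ F ω) ∧ rt j' ω < rt j ω} ≠ 0 →
    C < (∫ ω, ((rt j' ω : ℝ) - (rt j ω : ℝ)) ∂ μ[|{ω | (j ∈ F ω ∧ j' ∈ F ω) ∧ rt j ω < rt j' ω}]) -
        ∫ ω, ((rt j ω : ℝ) - (rt j' ω : ℝ)) ∂ μ[|{ω | (j ∈ F ω ∧ j' ∈ F ω) ∧ rt j' ω < rt j ω}]

/-- Unique Top-`k` Ranks. -/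
def UniqueTopK {M : ℕ} (r : Fin M → ℕ) (k : ℕ) : Prop :=
  (∀ j j' : Fin M, j ≠ j' → min (r j) (r j') < k → r j ≠ r j') ∧
    ∀ s < k, ∃ j : Fin M, r j = s

/-!
Split the events `{j ∈ F}` and `{j' ∈ F}`, which have the same probability, according to whether
the other feature is also in the minipatch. Multiplied by `P(j ∈ F)`, the gap `μ_{j'} - μ_j`
becomes an integral of `r̃_{j'} - r̃_j` over `{j, j' ∈ F}` plus a term that Unbiased Ordering makes
positive. On `{j, j' ∈ F}` the ranks differ by at least one; by Bounded Deviation the average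
positive gap dominates the average negative one, and Rank Consistency puts at least a fraction
`p` of the mass on the positive side, so this integral is at least `(2p - 1) P(j, j' ∈ F)`.
Finally `P(j, j' ∈ F) / P(j ∈ F) = (m - 1) / (M - 1)` for a uniform `m`-subset of `{1,…,M}`.
-/

open Finset in
theorem Finset.card_filter_superset_powersetCard {α : Type*} [DecidableEq α] {s t : Finset α}
    (hts : t ⊆ s) {k : ℕ} (htk : #t ≤ k) :
    #{A ∈ s.powersetCard k | t ⊆ A} = (#s - #t).choose (k - #t) := by
  rw [← card_sdiff_of_subset hts, ← card_powersetCard]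
  refine card_nbij' (· \ t) (· ∪ t) ?_ ?_ ?_ ?_
  · intro A hA
    simp only [mem_coe, mem_filter, mem_powersetCard] at hA ⊢
    exact ⟨sdiff_subset_sdiff hA.1.1 le_rfl, by rw [card_sdiff_of_subset hA.2, hA.1.2]⟩
  · intro B hB
    simp only [mem_coe, mem_filter, mem_powersetCard, subset_sdiff] at hB ⊢
    refine ⟨⟨union_subset hB.1.1 hts, ?_⟩, subset_union_right⟩
    rw [card_union_of_disjoint hB.1.2, hB.2]
    omega
  · intro A hA
    exact sdiff_union_of_subset (mem_filter.mp hA).2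
  · intro B hB
    exact union_sdiff_cancel_right (subset_sdiff.mp (mem_powersetCard.mp hB).1).2

namespace ProbabilityTheory

variable {Ω : Type*} [MeasurableSpace Ω] {μ : Measure Ω}

theorem integral_cond_eq_inv_mul_setIntegral (s : Set Ω) (f : Ω → ℝ) :
    ∫ ω, f ω ∂μ[|s] = (μ.real s)⁻¹ * ∫ ω in s, f ω ∂μ := by
  rw [cond, integral_smul_measure, ENNReal.toReal_inv, smul_eq_mul, measureReal_def]

theorem measureReal_mul_integral_cond_sub_integral_cond {A A' : Set Ω} {f g : Ω → ℝ}
    (hA : MeasurableSet A) (hA' : MeasurableSet A') (hf : IntegrableOn f A μ)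
    (hg : IntegrableOn g A' μ) (hAA' : μ A = μ A') (hA0 : μ.real A ≠ 0) :
    μ.real A * (∫ ω, g ω ∂μ[|A'] - ∫ ω, f ω ∂μ[|A]) =
      ∫ ω in A ∩ A', (g ω - f ω) ∂μ + (∫ ω in A' \ A, g ω ∂μ - ∫ ω in A \ A', f ω ∂μ) := by
  rw [integral_cond_eq_inv_mul_setIntegral, integral_cond_eq_inv_mul_setIntegral,
    measureReal_def μ A', ← hAA', ← measureReal_def,
    ← mul_sub, mul_inv_cancel_left₀ hA0, ← integral_inter_add_sdiff hA' hf,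
    ← integral_inter_add_sdiff hA hg, Set.inter_comm A' A,
    integral_sub (hg.mono_set Set.inter_subset_right) (hf.mono_set Set.inter_subset_left)]
  ring

theorem setIntegral_lt_setIntegral_of_integral_cond_lt {s t : Set Ω} {f g : Ω → ℝ}
    (hst : μ s = μ t) (h : ∫ ω, f ω ∂μ[|s] < ∫ ω, g ω ∂μ[|t]) :
    ∫ ω in s, f ω ∂μ < ∫ ω in t, g ω ∂μ := by
  rw [integral_cond_eq_inv_mul_setIntegral, integral_cond_eq_inv_mul_setIntegral,
    measureReal_def, measureReal_def, hst] at h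
  exact lt_of_mul_lt_mul_left h (by positivity)

theorem mul_measureReal_le_of_ofReal_le_cond [IsFiniteMeasure μ] {s t : Set Ω}
    (hs : MeasurableSet s) {p : ℝ} (hp : 0 < p) (h : ENNReal.ofReal p ≤ μ[t|s]) :
    p * μ.real s ≤ μ.real (s ∩ t) := by
  have hs0 : μ s ≠ 0 := fun h0 => by
    simp only [cond_eq_zero.mpr (Or.inr h0), Measure.coe_zero, Pi.zero_apply,
      ENNReal.ofReal_eq_zero, nonpos_iff_eq_zero] at h
    linarith
  rw [cond_apply hs, ← ENNReal.div_eq_inv_mul,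
    ENNReal.le_div_iff_mul_le (Or.inl hs0) (Or.inl (measure_ne_top μ s))] at h
  simpa [measureReal_def, ENNReal.toReal_mul, hp.le] using
    ENNReal.toReal_mono (measure_ne_top μ _) h

theorem mul_measureReal_le_setIntegral_sub [IsFiniteMeasure μ] {X Y : Ω → ℕ} {B : Set Ω} {p : ℝ}
    (hX : Measurable X) (hY : Measurable Y) (hB : MeasurableSet B)
    (hXi : IntegrableOn (fun ω => (X ω : ℝ)) B μ) (hYi : IntegrableOn (fun ω => (Y ω : ℝ)) B μ)
    (hXY : ∀ ω ∈ B, X ω ≠ Y ω) (hp : 1 / 2 < p)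
    (hcons : ENNReal.ofReal p ≤ μ[{ω | X ω < Y ω}|B])
    (hdev : μ (B ∩ {ω | X ω < Y ω}) ≠ 0 → μ (B ∩ {ω | Y ω < X ω}) ≠ 0 →
      ∫ ω, ((X ω : ℝ) - Y ω) ∂μ[|B ∩ {ω | Y ω < X ω}] <
        ∫ ω, ((Y ω : ℝ) - X ω) ∂μ[|B ∩ {ω | X ω < Y ω}]) :
    (2 * p - 1) * μ.real B ≤ ∫ ω in B, ((Y ω : ℝ) - X ω) ∂μ := by
  set Blt := B ∩ {ω | X ω < Y ω}
  set Bgt := B ∩ {ω | Y ω < X ω}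
  have hlt : MeasurableSet {ω | X ω < Y ω} := measurableSet_lt hX hY
  have hBgt : B \ {ω | X ω < Y ω} = Bgt := by
    ext ω
    simp only [Set.mem_sdiff, Set.mem_inter_iff, Set.mem_ofPred_eq, not_lt, Bgt]
    exact and_congr_right fun hω => Nat.le_iff_lt_or_eq.trans (or_iff_left (hXY ω hω).symm)
  have hdiffi : IntegrableOn (fun ω => (Y ω : ℝ) - X ω) B μ := hYi.sub hXi
  set IL := ∫ ω in Blt, ((Y ω : ℝ) - X ω) ∂μ
  set IG := ∫ ω in Bgt, ((X ω : ℝ) - Y ω) ∂μ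
  have hsplit : ∫ ω in B, ((Y ω : ℝ) - X ω) ∂μ = IL - IG := by
    rw [← integral_inter_add_sdiff hlt hdiffi, hBgt, sub_eq_add_neg, ← integral_neg]
    simp only [neg_sub]
    rfl
  have hmeas : μ.real Blt + μ.real Bgt = μ.real B := by
    rw [← hBgt, measureReal_inter_add_sdiff hlt]
  have hIL : μ.real Blt ≤ IL := by
    simpa using setIntegral_ge_of_const_le_real (c := 1) (hB.inter hlt) (measure_ne_top μ _)
      (fun ω hω => le_sub_iff_add_le'.2 (by exact_mod_cast (hω.2 : X ω + 1 ≤ Y ω)))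
      (hdiffi.mono_set Set.inter_subset_left)
  have hIG : μ.real Bgt ≤ IG := by
    simpa using setIntegral_ge_of_const_le_real (c := 1) (hB.inter (measurableSet_lt hY hX))
      (measure_ne_top μ _)
      (fun ω hω => le_sub_iff_add_le'.2 (by exact_mod_cast (hω.2 : Y ω + 1 ≤ X ω)))
      ((hXi.sub hYi).mono_set Set.inter_subset_left)
  have hcons' : p * (μ.real Blt + μ.real Bgt) ≤ μ.real Blt :=
    hmeas ▸ mul_measureReal_le_of_ofReal_le_cond hB (by linarith) hcons
  rw [hsplit, ← hmeas]
  by_cases hBgt0 : μ Bgt = 0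
  · have hIG0 : IG = 0 := setIntegral_measure_zero _ hBgt0
    have ht0 : μ.real Bgt = 0 := by simp [measureReal_def, hBgt0]
    rw [ht0, add_zero] at hcons' ⊢
    linarith
  have ht : 0 < μ.real Bgt := ENNReal.toReal_pos hBgt0 (measure_ne_top μ _)
  have hs : 0 < μ.real Blt := by
    nlinarith [measureReal_nonneg (μ := μ) (s := Blt), mul_pos (by linarith : 0 < p) ht]
  have hBlt0 : μ Blt ≠ 0 := fun h => hs.ne' (by simp [measureReal_def, h])
  have hgap := hdev hBlt0 hBgt0
  rw [integral_cond_eq_inv_mul_setIntegral, integral_cond_eq_inv_mul_setIntegral,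
    ← div_eq_inv_mul, ← div_eq_inv_mul, div_lt_div_iff₀ ht hs] at hgap
  -- With `s, t` the masses of `Blt, Bgt`: `IG * s < IL * t` and `t ≤ s ≤ IL` give
  -- `s - t ≤ IL - IG`, while `hcons'` gives `(2p - 1)(s + t) ≤ s - t`.
  nlinarith [mul_nonneg (sub_nonneg.2 hIL) (by nlinarith : (0:ℝ) ≤ μ.real Blt - μ.real Bgt)]

end ProbabilityTheory

namespace IsMinipatchRanking

open Finset

variable {Ω : Type*} [MeasurableSpace Ω] {μ : Measure Ω} {M m : ℕ} {S : Finset (Fin M)}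
  {F : Ω → Finset (Fin M)} {rt : Fin M → Ω → ℕ}

theorem measurableSet_setOf (hmp : IsMinipatchRanking μ m S F rt) (P : Finset (Fin M) → Prop) :
    MeasurableSet {ω | P (F ω)} :=
  hmp.measF trivial

theorem measure_setOf (hmp : IsMinipatchRanking μ m S F rt) (P : Finset (Fin M) → Prop)
    [DecidablePred P] :
    μ {ω | P (F ω)} = #{A ∈ S.powersetCard m | P A} * ((#S).choose m : ℝ≥0∞)⁻¹ := by
  have hunion : {ω | P (F ω)} = ⋃ A ∈ {A ∈ S.powersetCard m | P A}, {ω | F ω = A} := by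
    ext ω
    simp only [Set.mem_ofPred_eq, Set.mem_iUnion, mem_filter, mem_powersetCard, exists_prop]
    exact ⟨fun h => ⟨F ω, ⟨⟨hmp.subset ω, hmp.card_eq ω⟩, h⟩, rfl⟩,
      fun ⟨A, ⟨_, hA⟩, hFA⟩ => hFA ▸ hA⟩
  rw [hunion, measure_biUnion_finset (fun A _ B _ hAB => Set.disjoint_left.mpr
      fun ω hA hB => hAB (hA.symm.trans hB)) (fun A _ => hmp.measurableSet_setOf (· = A)),
    sum_congr rfl fun A hA => hmp.uniform A (mem_powersetCard.mp (mem_filter.mp hA).1).1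
      (mem_powersetCard.mp (mem_filter.mp hA).1).2, sum_const, nsmul_eq_mul]

theorem measureReal_superset (hmp : IsMinipatchRanking μ m S F rt) {T : Finset (Fin M)}
    (hTS : T ⊆ S) (hTm : #T ≤ m) :
    μ.real {ω | T ⊆ F ω} = (#S - #T).choose (m - #T) / (#S).choose m := by
  rw [measureReal_def, hmp.measure_setOf, card_filter_superset_powersetCard hTS hTm,
    ENNReal.toReal_mul, ENNReal.toReal_inv, ENNReal.toReal_natCast, ENNReal.toReal_natCast,
    div_eq_mul_inv]

theorem measureReal_mem (hmp : IsMinipatchRanking μ m S F rt) {j : Fin M} (hj : j ∈ S)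
    (hm : 1 ≤ m) : μ.real {ω | j ∈ F ω} = (#S - 1).choose (m - 1) / (#S).choose m := by
  simpa using hmp.measureReal_superset (T := {j}) (by simpa using hj) (by simpa using hm)

theorem measureReal_mem_and_mem (hmp : IsMinipatchRanking μ m S F rt) {j j' : Fin M}
    (hj : j ∈ S) (hj' : j' ∈ S) (hne : j ≠ j') (hm : 2 ≤ m) :
    μ.real {ω | j ∈ F ω ∧ j' ∈ F ω} = (#S - 2).choose (m - 2) / (#S).choose m := by
  have h := hmp.measureReal_superset (T := {j, j'}) (insert_subset hj (by simpa using hj'))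
    (by rwa [card_pair hne])
  simpa [card_pair hne, insert_subset_iff] using h

theorem measureReal_mem_mul_div (hmp : IsMinipatchRanking μ m S F rt) {j j' : Fin M}
    (hj : j ∈ S) (hj' : j' ∈ S) (hne : j ≠ j') (hm : 2 ≤ m) :
    μ.real {ω | j ∈ F ω} * (((m : ℝ) - 1) / ((#S : ℝ) - 1)) =
      μ.real {ω | j ∈ F ω ∧ j' ∈ F ω} := by
  have hS : 2 ≤ #S := card_pair hne ▸ card_le_card (insert_subset hj (singleton_subset_iff.2 hj'))
  have hchoose := Nat.add_one_mul_choose_eq (#S - 2) (m - 2)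
  rw [show #S - 2 + 1 = #S - 1 by omega, show m - 2 + 1 = m - 1 by omega] at hchoose
  have hS1 : ((#S - 1 : ℕ) : ℝ) ≠ 0 := by exact_mod_cast (by omega : #S - 1 ≠ 0)
  rw [hmp.measureReal_mem hj (by omega), hmp.measureReal_mem_and_mem hj hj' hne hm,
    ← Nat.cast_pred (by omega), ← Nat.cast_pred (by omega)]
  field_simp
  exact_mod_cast congrArg (fun n : ℕ => (n : ℝ) / (#S).choose m) hchoose.symm

theorem measureReal_mem_pos (hmp : IsMinipatchRanking μ m S F rt) {j : Fin M} (hj : j ∈ S)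
    (hm : 1 ≤ m) (hmS : m ≤ #S) : 0 < μ.real {ω | j ∈ F ω} := by
  rw [hmp.measureReal_mem hj hm]
  exact div_pos (Nat.cast_pos.2 (Nat.choose_pos (by omega))) (Nat.cast_pos.2 (Nat.choose_pos hmS))

theorem rank_lt (hmp : IsMinipatchRanking μ m S F rt) {j : Fin M} {ω : Ω} (hj : j ∈ F ω) :
    rt j ω < m :=
  (hmp.bij ω).mapsTo hj

theorem rank_ne (hmp : IsMinipatchRanking μ m S F rt) {j j' : Fin M} {ω : Ω} (hj : j ∈ F ω)
    (hj' : j' ∈ F ω) (hne : j ≠ j') : rt j ω ≠ rt j' ω :=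
  fun h => hne ((hmp.bij ω).injOn hj hj' h)

theorem integrableOn_rank [IsFiniteMeasure μ] (hmp : IsMinipatchRanking μ m S F rt) (j : Fin M) :
    IntegrableOn (fun ω => (rt j ω : ℝ)) {ω | j ∈ F ω} μ := by
  refine Measure.integrableOn_of_bounded (M := m) (measure_ne_top μ _)
    (measurable_from_top.comp (hmp.measRt j)).aestronglyMeasurable ?_
  rw [ae_restrict_iff' (hmp.measurableSet_setOf (j ∈ ·))]
  refine Filter.Eventually.of_forall fun ω hj => ?_
  rw [Real.norm_natCast]
  exact_mod_cast (hmp.rank_lt hj).le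

end IsMinipatchRanking

theorem separability_general {Ω : Type*} [MeasurableSpace Ω] (μ : Measure Ω) [IsProbabilityMeasure μ]
    {M m : ℕ} (hm2 : 2 ≤ m) (hmM : m ≤ M)
    (r : Fin M → ℕ) (F : Ω → Finset (Fin M)) (rt : Fin M → Ω → ℕ)
    (p C : ℝ) (hp : 1 / 2 < p) (hC : 0 < C)
    (hmp : IsMinipatchRanking μ m Finset.univ F rt)
    (hrc : RankConsistency μ r Finset.univ F rt p)
    (huo : UnbiasedOrdering μ r Finset.univ F rt)
    (hbd : BoundedDeviation μ r Finset.univ F rt C) :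
    ∀ j j' : Fin M, r j < r j' →
      (2 * p - 1) * ((m : ℝ) - 1) / ((M : ℝ) - 1) < muRank μ F rt j' - muRank μ F rt j := by
  intro j j' hr
  have hne : j ≠ j' := fun h => hr.ne (congrArg r h)
  have hj := Finset.mem_univ j
  have hj' := Finset.mem_univ j'
  set A := {ω | j ∈ F ω}
  set A' := {ω | j' ∈ F ω}
  have hA : MeasurableSet A := hmp.measurableSet_setOf (j ∈ ·)
  have hA' : MeasurableSet A' := hmp.measurableSet_setOf (j' ∈ ·)
  have hpair : (2 * p - 1) * μ.real (A ∩ A') ≤ ∫ ω in A ∩ A', ((rt j' ω : ℝ) - rt j ω) ∂μ :=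
    mul_measureReal_le_setIntegral_sub (hmp.measRt j) (hmp.measRt j') (hA.inter hA')
      ((hmp.integrableOn_rank j).mono_set Set.inter_subset_left)
      ((hmp.integrableOn_rank j').mono_set Set.inter_subset_right)
      (fun ω hω => hmp.rank_ne hω.1 hω.2 hne) hp (hrc j hj j' hj' hr)
      (fun h h' => sub_pos.1 (hC.trans (hbd j hj j' hj' hr h h')))
  have hsize : μ A = μ A' := by
    rw [← measureReal_eq_measureReal_iff, hmp.measureReal_mem hj (by omega),
      hmp.measureReal_mem hj' (by omega)]
  have hunbiased : ∫ ω in A \ A', (rt j ω : ℝ) ∂μ < ∫ ω in A' \ A, (rt j' ω : ℝ) ∂μ :=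
    setIntegral_lt_setIntegral_of_integral_cond_lt
      (measure_sdiff_symm hA.nullMeasurableSet hA'.nullMeasurableSet hsize (measure_ne_top μ _))
      (huo j hj j' hj' hr)
  have hApos : 0 < μ.real A :=
    hmp.measureReal_mem_pos hj (by omega) (by simpa using hmM)
  have hratio : μ.real A * (((m : ℝ) - 1) / ((M : ℝ) - 1)) = μ.real (A ∩ A') := by
    have h := hmp.measureReal_mem_mul_div hj hj' hne hm2
    rwa [Finset.card_univ, Fintype.card_fin] at h
  refine lt_of_mul_lt_mul_left ?_ hApos.le
  rw [mul_div_assoc, mul_left_comm, hratio, muRank, muRank,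
    measureReal_mul_integral_cond_sub_integral_cond hA hA' (hmp.integrableOn_rank j)
      (hmp.integrableOn_rank j') hsize hApos.ne']
  linarith

theorem separability {Ω : Type*} [MeasurableSpace Ω] (μ : Measure Ω) [IsProbabilityMeasure μ]
    {M m : ℕ} (hm2 : 2 ≤ m) (hmM : m ≤ M)
    (r : Fin M → ℕ) (F : Ω → Finset (Fin M)) (rt : Fin M → Ω → ℕ)
    (p C : ℝ) (hp : 1 / 2 < p) (hp1 : p ≤ 1) (hC : 0 < C)
    (hmp : IsMinipatchRanking μ m Finset.univ F rt)
    (hrc : RankConsistency μ r Finset.univ F rt p)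
    (huo : UnbiasedOrdering μ r Finset.univ F rt)
    (hbd : BoundedDeviation μ r Finset.univ F rt C) :
    ∀ j j' : Fin M, r j < r j' →
      (2 * p - 1) * ((m : ℝ) - 1) / ((M : ℝ) - 1) < muRank μ F rt j' - muRank μ F rt j :=
  separability_general μ hm2 hmM r F rt p C hp hC hmp hrc huo hbd
end
end

section
/- Let A and B be events on a probability space with P(A ∩ B) > 0, P(A ∩ Bᶜ) > 0, P(Aᶜ ∩ B) > 0, and P(Bᶜ | A) = P(Aᶜ | B). Let X and Y be integrable real random variables such that E[X | A ∩ Bᶜ] < E[Y | Aᶜ ∩ B] and E[X | A ∩ B] < E[Y | A ∩ B]. Then E[X | A] < E[Y | B]. -/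
open MeasureTheory ProbabilityTheory Real

theorem cond_exp_mixture_lt {Ω : Type*} [MeasurableSpace Ω]
    (μ : Measure Ω) [IsProbabilityMeasure μ]
    (A B : Set Ω) (hA : MeasurableSet A) (hB : MeasurableSet B)
    (hAB : 0 < μ (A ∩ B)) (hABc : 0 < μ (A ∩ Bᶜ)) (hAcB : 0 < μ (Aᶜ ∩ B))
    (hsym : μ[|A] Bᶜ = μ[|B] Aᶜ)
    (X Y : Ω → ℝ) (hXi : Integrable X μ) (hYi : Integrable Y μ)
    (h1 : (∫ ω, X ω ∂ μ[|A ∩ Bᶜ]) < ∫ ω, Y ω ∂ μ[|Aᶜ ∩ B])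
    (h2 : (∫ ω, X ω ∂ μ[|A ∩ B]) < ∫ ω, Y ω ∂ μ[|A ∩ B]) :
    (∫ ω, X ω ∂ μ[|A]) < ∫ ω, Y ω ∂ μ[|B] := by
  have hcond : ∀ (Z : Ω → ℝ) (S : Set Ω),
      (∫ ω, Z ω ∂ μ[|S]) = (μ S).toReal⁻¹ * ∫ ω in S, Z ω ∂μ := by
    intro Z S
    rw [ProbabilityTheory.cond, integral_smul_measure, ENNReal.toReal_inv, smul_eq_mul]
  set a := (μ (A ∩ B)).toReal with ha_def
  set b := (μ (A ∩ Bᶜ)).toReal with hb_def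
  set c := (μ (Aᶜ ∩ B)).toReal with hc_def
  have ha : 0 < a := ENNReal.toReal_pos hAB.ne' (measure_ne_top _ _)
  have hb : 0 < b := ENNReal.toReal_pos hABc.ne' (measure_ne_top _ _)
  have hc : 0 < c := ENNReal.toReal_pos hAcB.ne' (measure_ne_top _ _)
  have hμA : (μ A).toReal = a + b := by
    rw [← measure_inter_add_diff A hB, ENNReal.toReal_add (measure_ne_top _ _) (measure_ne_top _ _),
      Set.diff_eq]
  have hμB : (μ B).toReal = a + c := by
    rw [← measure_inter_add_diff B hA, ENNReal.toReal_add (measure_ne_top _ _) (measure_ne_top _ _),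
      Set.diff_eq, Set.inter_comm B A, Set.inter_comm B Aᶜ]
  -- convert hsym to reals
  have hsymr : (a + b)⁻¹ * b = (a + c)⁻¹ * c := by
    have h := congrArg ENNReal.toReal hsym
    rw [ProbabilityTheory.cond_apply hA μ Bᶜ, ProbabilityTheory.cond_apply hB μ Aᶜ,
      ENNReal.toReal_mul, ENNReal.toReal_mul, ENNReal.toReal_inv, ENNReal.toReal_inv,
      Set.inter_comm B Aᶜ, hμA, hμB] at h
    exact h
  have hbc : b = c := by
    have hab : (0:ℝ) < a + b := by linarith
    have hac : (0:ℝ) < a + c := by linarith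
    field_simp at hsymr
    nlinarith
  have hsplit : ∀ (Z : Ω → ℝ), Integrable Z μ → ∀ (S T : Set Ω), MeasurableSet S → MeasurableSet T →
      (∫ ω in S, Z ω ∂μ) = (∫ ω in S ∩ T, Z ω ∂μ) + ∫ ω in S ∩ Tᶜ, Z ω ∂μ := by
    intro Z hZ S T hS hT
    rw [← setIntegral_union
        ((disjoint_compl_right).mono Set.inter_subset_right Set.inter_subset_right)
        (hS.inter hT.compl) hZ.integrableOn hZ.integrableOn, Set.inter_union_compl]
  rw [hcond, hcond, hμA, hμB, hsplit X hXi A B hA hB, hsplit Y hYi B A hB hA,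
    Set.inter_comm B A, Set.inter_comm B Aᶜ]
  simp only [hcond] at h1 h2
  rw [← hb_def, ← hc_def] at h1
  rw [← ha_def] at h2
  have hX1 : (∫ ω in A ∩ Bᶜ, X ω ∂μ) < ∫ ω in Aᶜ ∩ B, Y ω ∂μ := by
    have := mul_lt_mul_of_pos_left h1 hb
    rw [hbc] at this
    calc (∫ ω in A ∩ Bᶜ, X ω ∂μ) = c * (c⁻¹ * ∫ ω in A ∩ Bᶜ, X ω ∂μ) := by
          field_simp
      _ < c * (c⁻¹ * ∫ ω in Aᶜ ∩ B, Y ω ∂μ) := this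
      _ = ∫ ω in Aᶜ ∩ B, Y ω ∂μ := by field_simp
  have hX2 : (∫ ω in A ∩ B, X ω ∂μ) < ∫ ω in A ∩ B, Y ω ∂μ := by
    have := mul_lt_mul_of_pos_left h2 ha
    calc (∫ ω in A ∩ B, X ω ∂μ) = a * (a⁻¹ * ∫ ω in A ∩ B, X ω ∂μ) := by field_simp
      _ < a * (a⁻¹ * ∫ ω in A ∩ B, Y ω ∂μ) := this
      _ = ∫ ω in A ∩ B, Y ω ∂μ := by field_simp
  rw [hbc]
  have hac : (0:ℝ) < (a + c)⁻¹ := by positivity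
  apply mul_lt_mul_of_pos_left _ hac
  linarith
end

section
/- Let Z be a random variable on a probability space with the Binomial(B, q) distribution, where B ≥ 1 is an integer and q ∈ (0, 1]. Let A be an event and c > 0 a constant such that P(A ∩ {Z = n}) ≤ e^{−c·n}·P(Z = n) for every n ∈ {0, 1, …, B}. Then P(A) ≤ exp(−Bq/8) + exp(−Bqc/2). -/
open MeasureTheory ProbabilityTheory Real

lemma binom_exp_sum (B : ℕ) (q x : ℝ) :
    ∑ n ∈ Finset.range (B+1), x^n * ((B.choose n : ℝ) * q^n * (1-q)^(B-n))
      = (x*q + (1-q))^B := by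
  rw [add_pow]
  apply Finset.sum_congr rfl
  intro n hn
  rw [mul_pow]
  ring

theorem binomial_conditional_tail_bound {Ω : Type*} [MeasurableSpace Ω]
    (μ : Measure Ω) [IsProbabilityMeasure μ]
    (B : ℕ) (hB : 1 ≤ B) (q : ℝ) (hq0 : 0 < q) (hq1 : q ≤ 1)
    (Z : Ω → ℕ) (hZmeas : ∀ n : ℕ, MeasurableSet {ω | Z ω = n})
    (hbinom : ∀ n : ℕ, μ {ω | Z ω = n} =
      ENNReal.ofReal ((B.choose n : ℝ) * q ^ n * (1 - q) ^ (B - n)))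
    (A : Set Ω) (hA : MeasurableSet A) (c : ℝ) (hc : 0 < c)
    (hbound : ∀ n : ℕ, n ≤ B → μ (A ∩ {ω | Z ω = n}) ≤
      ENNReal.ofReal (Real.exp (-c * n)) * μ {ω | Z ω = n}) :
    μ A ≤ ENNReal.ofReal (Real.exp (-((B : ℝ) * q) / 8) +
      Real.exp (-((B : ℝ) * q * c) / 2)) := by
  classical
  set p : ℕ → ℝ := fun n => (B.choose n : ℝ) * q ^ n * (1 - q) ^ (B - n) with hp_def
  have hq2 : (0:ℝ) ≤ 1 - q := by linarith
  have hp0 : ∀ n, 0 ≤ p n := by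
    intro n
    have : (0:ℝ) ≤ (B.choose n : ℝ) := Nat.cast_nonneg _
    positivity
  have hsum : ∀ x : ℝ, ∑ n ∈ Finset.range (B+1), x^n * p n = (x*q + (1-q))^B :=
    fun x => binom_exp_sum B q x
  have hsum1 : ∑ n ∈ Finset.range (B+1), p n = 1 := by
    have h := hsum 1
    simp only [one_pow, one_mul] at h
    rw [h]
    norm_num
  -- full measure of the union
  set U : Set Ω := ⋃ n ∈ Finset.range (B+1), {ω | Z ω = n} with hU_def
  have hUmeas : MeasurableSet U := Finset.measurableSet_biUnion _ (fun n _ => hZmeas n)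
  have hdisj : ((Finset.range (B+1) : Finset ℕ) : Set ℕ).PairwiseDisjoint
      (fun n => {ω | Z ω = n}) := by
    intro a _ b _ hab
    rw [Function.onFun, Set.disjoint_left]
    intro ω h1 h2
    exact hab (h1.symm.trans h2)
  have hUfull : μ U = 1 := by
    rw [hU_def, measure_biUnion_finset hdisj (fun n _ => hZmeas n),
      Finset.sum_congr rfl (fun n _ => hbinom n),
      ← ENNReal.ofReal_sum_of_nonneg (fun n _ => hp0 n), hsum1]
    simp
  have hUc : μ Uᶜ = 0 := by
    rw [measure_compl hUmeas (measure_ne_top μ U), hUfull, measure_univ, tsub_self]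
  have hAle : μ A ≤ ∑ n ∈ Finset.range (B+1), μ (A ∩ {ω | Z ω = n}) := by
    have h2 : μ A ≤ μ (A ∩ U) := by
      calc μ A = μ (A ∩ U) + μ (A \ U) := (measure_inter_add_diff A hUmeas).symm
        _ ≤ μ (A ∩ U) + μ Uᶜ := by
            gcongr
            exact Set.diff_subset_iff.mpr (by simp [Set.union_comm, Set.compl_union_self])
        _ = μ (A ∩ U) := by rw [hUc, add_zero]
    calc μ A ≤ μ (A ∩ U) := h2
      _ = μ (⋃ n ∈ Finset.range (B+1), A ∩ {ω | Z ω = n}) := by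
          rw [hU_def, Set.inter_iUnion₂]
      _ ≤ ∑ n ∈ Finset.range (B+1), μ (A ∩ {ω | Z ω = n}) :=
          measure_biUnion_finset_le _ _
  -- termwise bound
  set g : ℕ → ℝ := fun n => if (n:ℝ) < (B:ℝ)*q/2 then p n else Real.exp (-c*n) * p n
    with hg_def
  have hg0 : ∀ n, 0 ≤ g n := by
    intro n
    rw [hg_def]
    dsimp only
    split_ifs
    · exact hp0 n
    · exact mul_nonneg (Real.exp_nonneg _) (hp0 n)
  have hterm : ∀ n ∈ Finset.range (B+1),
      μ (A ∩ {ω | Z ω = n}) ≤ ENNReal.ofReal (g n) := by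
    intro n hn
    rw [hg_def]
    dsimp only
    split_ifs with h
    · calc μ (A ∩ {ω | Z ω = n}) ≤ μ {ω | Z ω = n} :=
            measure_mono Set.inter_subset_right
        _ = ENNReal.ofReal (p n) := hbinom n
    · rw [ENNReal.ofReal_mul (Real.exp_nonneg _)]
      calc μ (A ∩ {ω | Z ω = n})
          ≤ ENNReal.ofReal (Real.exp (-c*n)) * μ {ω | Z ω = n} :=
            hbound n (Nat.lt_succ_iff.mp (Finset.mem_range.mp hn))
        _ = ENNReal.ofReal (Real.exp (-c*n)) * ENNReal.ofReal (p n) := by rw [hbinom n]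
  have hmain : μ A ≤ ENNReal.ofReal (∑ n ∈ Finset.range (B+1), g n) := by
    calc μ A ≤ ∑ n ∈ Finset.range (B+1), μ (A ∩ {ω | Z ω = n}) := hAle
      _ ≤ ∑ n ∈ Finset.range (B+1), ENNReal.ofReal (g n) := Finset.sum_le_sum hterm
      _ = ENNReal.ofReal (∑ n ∈ Finset.range (B+1), g n) :=
          (ENNReal.ofReal_sum_of_nonneg (fun n _ => hg0 n)).symm
  refine le_trans hmain (ENNReal.ofReal_le_ofReal ?_)
  -- real inequality
  have hsplit : ∑ n ∈ Finset.range (B+1), g n =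
      (∑ n ∈ (Finset.range (B+1)).filter (fun n : ℕ => (n:ℝ) < (B:ℝ)*q/2), p n) +
      ∑ n ∈ (Finset.range (B+1)).filter (fun n : ℕ => ¬ ((n:ℝ) < (B:ℝ)*q/2)),
        Real.exp (-c*n) * p n := by
    rw [hg_def]
    exact Finset.sum_ite _ _
  rw [hsplit]
  have hB1 : (1:ℝ) ≤ (B:ℝ) := by exact_mod_cast hB
  have hBq : 0 < (B:ℝ) * q := by nlinarith
  gcongr
  -- small-n part: Chernoff
  · set t : ℝ := Real.log 2 with ht_def
    have ht0 : 0 < t := Real.log_pos (by norm_num)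
    have htlt : t < 0.6931471808 := Real.log_two_lt_d9
    have hexp_t : Real.exp (-t) = 1/2 := by
      rw [Real.exp_neg, Real.exp_log (by norm_num : (0:ℝ) < 2)]
      norm_num
    calc ∑ n ∈ (Finset.range (B+1)).filter (fun n : ℕ => (n:ℝ) < (B:ℝ)*q/2), p n
        ≤ ∑ n ∈ (Finset.range (B+1)).filter (fun n : ℕ => (n:ℝ) < (B:ℝ)*q/2),
            Real.exp (t*((B:ℝ)*q/2)) * (Real.exp (-t) ^ n * p n) := by
          apply Finset.sum_le_sum
          intro n hn
          have hn2 : (n:ℝ) < (B:ℝ)*q/2 := (Finset.mem_filter.mp hn).2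
          have he : Real.exp (t*((B:ℝ)*q/2)) * Real.exp (-t) ^ n =
              Real.exp (t*((B:ℝ)*q/2) + n * (-t)) := by
            rw [Real.exp_add, Real.exp_nat_mul]
          have h1 : 1 ≤ Real.exp (t*((B:ℝ)*q/2)) * Real.exp (-t) ^ n := by
            rw [he]
            apply Real.one_le_exp
            nlinarith
          calc p n = 1 * p n := (one_mul _).symm
            _ ≤ (Real.exp (t*((B:ℝ)*q/2)) * Real.exp (-t) ^ n) * p n :=
                mul_le_mul_of_nonneg_right h1 (hp0 n)
            _ = Real.exp (t*((B:ℝ)*q/2)) * (Real.exp (-t) ^ n * p n) := by ring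
      _ ≤ ∑ n ∈ Finset.range (B+1),
            Real.exp (t*((B:ℝ)*q/2)) * (Real.exp (-t) ^ n * p n) := by
          apply Finset.sum_le_sum_of_subset_of_nonneg (Finset.filter_subset _ _)
          intro n _ _
          have := hp0 n
          positivity
      _ = Real.exp (t*((B:ℝ)*q/2)) *
            ∑ n ∈ Finset.range (B+1), Real.exp (-t) ^ n * p n := by
          rw [Finset.mul_sum]
      _ = Real.exp (t*((B:ℝ)*q/2)) * (Real.exp (-t) * q + (1-q))^B := by
          rw [hsum (Real.exp (-t))]
      _ = Real.exp (t*((B:ℝ)*q/2)) * (1 - q/2)^B := by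
          rw [hexp_t]; ring_nf
      _ ≤ Real.exp (t*((B:ℝ)*q/2)) * Real.exp (-(q/2)) ^ B := by
          gcongr
          · linarith
          · nlinarith [Real.add_one_le_exp (-(q/2))]
      _ = Real.exp (t*((B:ℝ)*q/2) + (B:ℝ) * (-(q/2))) := by
          rw [Real.exp_add, Real.exp_nat_mul]
      _ ≤ Real.exp (-((B : ℝ) * q) / 8) := by
          apply Real.exp_le_exp.mpr
          nlinarith
  -- large-n part
  · calc ∑ n ∈ (Finset.range (B+1)).filter (fun n : ℕ => ¬ ((n:ℝ) < (B:ℝ)*q/2)),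
          Real.exp (-c*n) * p n
        ≤ ∑ n ∈ (Finset.range (B+1)).filter (fun n : ℕ => ¬ ((n:ℝ) < (B:ℝ)*q/2)),
          Real.exp (-((B : ℝ) * q * c) / 2) * p n := by
          apply Finset.sum_le_sum
          intro n hn
          have hn2 : (B:ℝ)*q/2 ≤ (n:ℝ) := not_lt.mp (Finset.mem_filter.mp hn).2
          apply mul_le_mul_of_nonneg_right _ (hp0 n)
          apply Real.exp_le_exp.mpr
          nlinarith
      _ = Real.exp (-((B : ℝ) * q * c) / 2) *
          ∑ n ∈ (Finset.range (B+1)).filter (fun n : ℕ => ¬ ((n:ℝ) < (B:ℝ)*q/2)), p n := by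
          rw [Finset.mul_sum]
      _ ≤ Real.exp (-((B : ℝ) * q * c) / 2) * ∑ n ∈ Finset.range (B+1), p n := by
          exact mul_le_mul_of_nonneg_left
            (Finset.sum_le_sum_of_subset_of_nonneg (Finset.filter_subset _ _)
              (fun n _ _ => hp0 n)) (Real.exp_nonneg _)
      _ = Real.exp (-((B : ℝ) * q * c) / 2) := by rw [hsum1, mul_one]
end

section
/- Let m, M, k be integers with 2 ≤ m ≤ M and k ≥ 1, let δ ∈ (0, 1) and p ∈ (1/2, 1] be real, and set q = m/M. Let ε be any real number with ε ≥ (2p − 1)(m − 1)/(2(M − 1)) and ε > 0. If B is a real number with B ≥ (16·M·(M − 1)²/((2p − 1)²·m))·ln(4kM/δ), then 2kM·(exp(−Bq/8) + exp(−Bq·ε²/(4(m − 1)²))) ≤ δ. -/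
open Real

set_option maxHeartbeats 1600000 in
theorem budget_bound_suffices (m M k : ℕ) (hm2 : 2 ≤ m) (hmM : m ≤ M) (hk : 1 ≤ k)
    (δ p : ℝ) (hδ0 : 0 < δ) (hδ1 : δ < 1) (hp : 1 / 2 < p) (hp1 : p ≤ 1)
    (q : ℝ) (hq : q = (m : ℝ) / M)
    (ε : ℝ) (hε0 : 0 < ε)
    (hεlb : (2 * p - 1) * ((m : ℝ) - 1) / (2 * ((M : ℝ) - 1)) ≤ ε)
    (B : ℝ) (hB : 16 * (M : ℝ) * ((M : ℝ) - 1) ^ 2 / ((2 * p - 1) ^ 2 * (m : ℝ)) *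
      Real.log (4 * (k : ℝ) * (M : ℝ) / δ) ≤ B) :
    2 * (k : ℝ) * (M : ℝ) * (Real.exp (-(B * q) / 8) +
      Real.exp (-(B * q * ε ^ 2) / (4 * ((m : ℝ) - 1) ^ 2))) ≤ δ := by
  have hmr : (2 : ℝ) ≤ (m : ℝ) := by exact_mod_cast hm2
  have hMr : (2 : ℝ) ≤ (M : ℝ) := by exact_mod_cast hm2.trans hmM
  have hmMr : (m : ℝ) ≤ (M : ℝ) := by exact_mod_cast hmM
  have hkr : (1 : ℝ) ≤ (k : ℝ) := by exact_mod_cast hk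
  have hs : 0 < 2 * p - 1 := by linarith
  have hs1 : 2 * p - 1 ≤ 1 := by linarith
  have hd : (1 : ℝ) ≤ (M : ℝ) - 1 := by linarith
  have he : (1 : ℝ) ≤ (m : ℝ) - 1 := by linarith
  have hMpos : (0 : ℝ) < (M : ℝ) := by linarith
  have hmpos : (0 : ℝ) < (m : ℝ) := by linarith
  set L : ℝ := Real.log (4 * (k : ℝ) * (M : ℝ) / δ) with hLdef
  have hxpos : (0 : ℝ) < 4 * (k : ℝ) * (M : ℝ) / δ := by positivity
  have hL : 0 ≤ L := by
    apply Real.log_nonneg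
    rw [le_div_iff₀ hδ0]
    nlinarith
  -- clear denominators in hB
  have hB' : 16 * (M : ℝ) * ((M : ℝ) - 1) ^ 2 * L ≤ B * ((2 * p - 1) ^ 2 * (m : ℝ)) := by
    rw [div_mul_eq_mul_div, div_le_iff₀ (by positivity)] at hB
    linarith
  have hc : 0 < (2 * p - 1) ^ 2 * (m : ℝ) := by positivity
  have h0 : 0 ≤ 16 * (M : ℝ) * ((M : ℝ) - 1) ^ 2 * L := by positivity
  have hBpos : 0 ≤ B := by
    have h1 : 0 * ((2 * p - 1) ^ 2 * (m : ℝ)) ≤ B * ((2 * p - 1) ^ 2 * (m : ℝ)) := by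
      rw [zero_mul]; linarith
    exact le_of_mul_le_mul_right h1 hc
  -- ε lower bound squared
  have hε2 : (2 * p - 1) ^ 2 * ((m : ℝ) - 1) ^ 2 ≤ 4 * ((M : ℝ) - 1) ^ 2 * ε ^ 2 := by
    have h1 : (2 * p - 1) * ((m : ℝ) - 1) ≤ 2 * ((M : ℝ) - 1) * ε := by
      rw [div_le_iff₀ (by nlinarith)] at hεlb
      linarith
    nlinarith [mul_self_le_mul_self (by positivity : (0:ℝ) ≤ (2 * p - 1) * ((m : ℝ) - 1)) h1]
  have hs2 : (2 * p - 1) ^ 2 ≤ 1 := by nlinarith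
  have hBm : B * ((2 * p - 1) ^ 2 * (m : ℝ)) ≤ B * (m : ℝ) := by
    have : (2 * p - 1) ^ 2 * (m : ℝ) ≤ (m : ℝ) := by nlinarith
    nlinarith [mul_le_mul_of_nonneg_left this hBpos]
  have hq1 : L ≤ B * q / 8 := by
    have heq1 : B * ((m : ℝ) / (M : ℝ)) / 8 = B * (m : ℝ) / ((M : ℝ) * 8) := by ring
    rw [hq, heq1, le_div_iff₀ (by positivity)]
    have h16 : 8 * (M : ℝ) * L ≤ 16 * (M : ℝ) * ((M : ℝ) - 1) ^ 2 * L := by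
      nlinarith [mul_nonneg (mul_nonneg (by linarith : (0:ℝ) ≤ 8 * (M : ℝ)) hL)
        (by nlinarith : (0:ℝ) ≤ 2 * ((M : ℝ) - 1) ^ 2 - 1)]
    nlinarith
  have hq2 : L ≤ B * q * ε ^ 2 / (4 * ((m : ℝ) - 1) ^ 2) := by
    have heq : B * ((m : ℝ) / (M : ℝ)) * ε ^ 2 / (4 * ((m : ℝ) - 1) ^ 2)
        = B * (m : ℝ) * ε ^ 2 / ((M : ℝ) * (4 * ((m : ℝ) - 1) ^ 2)) := by
      field_simp
    rw [hq, heq, le_div_iff₀ (by positivity)]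
    have hBmnn : 0 ≤ B * (m : ℝ) := mul_nonneg hBpos hmpos.le
    have h1 : 16 * (M : ℝ) * ((M : ℝ) - 1) ^ 2 * L * ((m : ℝ) - 1) ^ 2
        ≤ B * ((2 * p - 1) ^ 2 * (m : ℝ)) * ((m : ℝ) - 1) ^ 2 :=
      mul_le_mul_of_nonneg_right hB' (by positivity)
    have h2 : B * (m : ℝ) * ((2 * p - 1) ^ 2 * ((m : ℝ) - 1) ^ 2)
        ≤ B * (m : ℝ) * (4 * ((M : ℝ) - 1) ^ 2 * ε ^ 2) :=
      mul_le_mul_of_nonneg_left hε2 hBmnn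
    have hd2 : (0:ℝ) < 4 * ((M : ℝ) - 1) ^ 2 := by positivity
    have h3 : 4 * ((M : ℝ) - 1) ^ 2 * (L * ((M : ℝ) * (4 * ((m : ℝ) - 1) ^ 2)))
        ≤ 4 * ((M : ℝ) - 1) ^ 2 * (B * (m : ℝ) * ε ^ 2) := by nlinarith
    exact le_of_mul_le_mul_left h3 hd2
  have hexpL : Real.exp (-L) = δ / (4 * (k : ℝ) * (M : ℝ)) := by
    rw [Real.exp_neg, Real.exp_log hxpos]
    field_simp
  have h1 : Real.exp (-(B * q) / 8) ≤ δ / (4 * (k : ℝ) * (M : ℝ)) := by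
    rw [← hexpL]
    apply Real.exp_le_exp.mpr
    rw [neg_div]
    linarith
  have h2 : Real.exp (-(B * q * ε ^ 2) / (4 * ((m : ℝ) - 1) ^ 2)) ≤
      δ / (4 * (k : ℝ) * (M : ℝ)) := by
    rw [← hexpL]
    apply Real.exp_le_exp.mpr
    rw [neg_div]
    linarith
  have hkM : (0 : ℝ) < 4 * (k : ℝ) * (M : ℝ) := by positivity
  calc 2 * (k : ℝ) * (M : ℝ) * (Real.exp (-(B * q) / 8) +
      Real.exp (-(B * q * ε ^ 2) / (4 * ((m : ℝ) - 1) ^ 2)))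
      ≤ 2 * (k : ℝ) * (M : ℝ) * (δ / (4 * (k : ℝ) * (M : ℝ)) + δ / (4 * (k : ℝ) * (M : ℝ))) := by
        apply mul_le_mul_of_nonneg_left (by linarith) (by positivity)
    _ = δ := by field_simp; ring
end

section
/- Let T ≥ 3, 2 ≤ m ≤ M, and k ≥ 1 be integers, let δ ∈ (0, 1) and p ∈ (1/2, 1] be real. Define Δ₁ = (2p − 1)(m − 1)/(M − 1), and for each t ∈ {1, …, T} define N_t = M/2^{t−1} (as a real number), Δ_t = 2^{t−1}·Δ₁, and B_t = (16·(m − 1)²·N_t/(m·Δ_t²))·ln(4kT·N_t/δ). Then ∑_{t=1}^{T} B_t ≤ (96/5)·(M·(M − 1)²/(m·(2p − 1)²))·ln(4kTM/δ). -/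
set_option maxHeartbeats 1000000
open Real Finset

theorem rampart_budget_sum_bound (T m M k : ℕ) (hT : 3 ≤ T) (hm2 : 2 ≤ m) (hmM : m ≤ M)
    (hk : 1 ≤ k) (δ p : ℝ) (hδ0 : 0 < δ) (hδ1 : δ < 1) (hp : 1 / 2 < p) (hp1 : p ≤ 1)
    (Δ₁ : ℝ) (hΔ₁ : Δ₁ = (2 * p - 1) * ((m : ℝ) - 1) / ((M : ℝ) - 1))
    (N : ℕ → ℝ) (hN : ∀ t, N t = (M : ℝ) / 2 ^ (t - 1))
    (Δ : ℕ → ℝ) (hΔ : ∀ t, Δ t = 2 ^ (t - 1) * Δ₁)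
    (B : ℕ → ℝ) (hB : ∀ t, B t = 16 * ((m : ℝ) - 1) ^ 2 * N t / ((m : ℝ) * (Δ t) ^ 2) *
      Real.log (4 * (k : ℝ) * (T : ℝ) * N t / δ)) :
    (∑ t ∈ Finset.Icc 1 T, B t) ≤
      96 / 5 * ((M : ℝ) * ((M : ℝ) - 1) ^ 2 / ((m : ℝ) * (2 * p - 1) ^ 2)) *
        Real.log (4 * (k : ℝ) * (T : ℝ) * (M : ℝ) / δ) := by
  have hm1 : (1:ℝ) ≤ (m:ℝ) - 1 := by
    have : (2:ℝ) ≤ (m:ℝ) := by exact_mod_cast hm2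
    linarith
  have hM2 : (2:ℝ) ≤ (M:ℝ) := by exact_mod_cast le_trans hm2 hmM
  have hM1 : (1:ℝ) ≤ (M:ℝ) - 1 := by linarith
  have hmpos : (0:ℝ) < (m:ℝ) := by linarith
  have hMpos : (0:ℝ) < (M:ℝ) := by linarith
  have h2p : (0:ℝ) < 2 * p - 1 := by linarith
  have hk1 : (1:ℝ) ≤ (k:ℝ) := by exact_mod_cast hk
  have hT3 : (3:ℝ) ≤ (T:ℝ) := by exact_mod_cast hT
  set L : ℝ := Real.log (4 * (k : ℝ) * (T : ℝ) * (M : ℝ) / δ) with hL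
  have hL0 : 0 ≤ L := by
    apply Real.log_nonneg
    rw [le_div_iff₀ hδ0]
    have h1 : (3:ℝ) ≤ (k:ℝ) * (T:ℝ) := by nlinarith
    have h2 : (6:ℝ) ≤ (k:ℝ) * (T:ℝ) * (M:ℝ) := by nlinarith
    nlinarith
  set Q : ℝ := (M : ℝ) * ((M : ℝ) - 1) ^ 2 / ((m : ℝ) * (2 * p - 1) ^ 2) with hQ
  have hQ0 : 0 ≤ Q := by positivity
  have key : ∀ t ∈ Finset.Icc 1 T, B t ≤ 16 * Q * ((1/8:ℝ) ^ (t-1)) * L := by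
    intro t ht
    rw [hB, hN, hΔ]
    have hx : (0:ℝ) < (2:ℝ) ^ (t-1) := by positivity
    have hx1 : (1:ℝ) ≤ (2:ℝ) ^ (t-1) := one_le_pow₀ (by norm_num)
    have hΔ₁pos : 0 < Δ₁ := by
      rw [hΔ₁]; apply div_pos (mul_pos h2p (by linarith)) (by linarith)
    have hcoef : 0 ≤ 16 * ((m : ℝ) - 1) ^ 2 * ((M:ℝ) / 2 ^ (t - 1)) /
        ((m : ℝ) * ((2:ℝ) ^ (t - 1) * Δ₁) ^ 2) := by positivity
    have hNM : (M:ℝ) / 2 ^ (t-1) ≤ (M:ℝ) := by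
      rw [div_le_iff₀ hx]; nlinarith
    have hlog : Real.log (4 * (k : ℝ) * (T : ℝ) * ((M:ℝ) / 2 ^ (t - 1)) / δ) ≤ L := by
      apply Real.log_le_log (by positivity)
      gcongr
    calc 16 * ((m : ℝ) - 1) ^ 2 * ((M:ℝ) / 2 ^ (t - 1)) /
        ((m : ℝ) * ((2:ℝ) ^ (t - 1) * Δ₁) ^ 2) *
        Real.log (4 * (k : ℝ) * (T : ℝ) * ((M:ℝ) / 2 ^ (t - 1)) / δ)
        ≤ 16 * ((m : ℝ) - 1) ^ 2 * ((M:ℝ) / 2 ^ (t - 1)) /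
        ((m : ℝ) * ((2:ℝ) ^ (t - 1) * Δ₁) ^ 2) * L :=
          mul_le_mul_of_nonneg_left hlog hcoef
      _ = 16 * Q * ((1/8:ℝ) ^ (t-1)) * L := by
          have h8 : ((1:ℝ)/8) ^ (t-1) = (((2:ℝ) ^ (t-1))⁻¹) ^ 3 := by
            rw [← inv_pow, ← pow_mul, mul_comm, pow_mul]
            norm_num
          rw [h8, hQ, hΔ₁]
          have hxne : ((2:ℝ) ^ (t-1)) ≠ 0 := ne_of_gt hx
          have hmne : ((m:ℝ)) ≠ 0 := ne_of_gt hmpos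
          have hm1ne : ((m:ℝ) - 1) ≠ 0 := by linarith
          have hM1ne : ((M:ℝ) - 1) ≠ 0 := by linarith
          have h2pne : (2*p - 1) ≠ 0 := ne_of_gt h2p
          field_simp
  have hsum := Finset.sum_le_sum key
  refine le_trans hsum ?_
  have hgeom : (∑ t ∈ Finset.Icc 1 T, (1/8:ℝ) ^ (t-1)) ≤ 8/7 := by
    have : (∑ t ∈ Finset.Icc 1 T, (1/8:ℝ) ^ (t-1)) = ∑ i ∈ Finset.range T, (1/8:ℝ) ^ i := by
      have : Finset.Icc 1 T = Finset.Ico 1 (T+1) := by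
        rw [Finset.Ico_add_one_right_eq_Icc]
      rw [this, Finset.sum_Ico_eq_sum_range]
      simp
    rw [this, geom_sum_eq (by norm_num)]
    have hp0 : (0:ℝ) ≤ (1/8:ℝ) ^ T := by positivity
    have heq : ((1/8:ℝ) ^ T - 1) / (1/8 - 1) = (1 - (1/8:ℝ)^T) * (8/7) := by
      field_simp; ring
    rw [heq]; linarith
  calc (∑ t ∈ Finset.Icc 1 T, 16 * Q * ((1/8:ℝ) ^ (t-1)) * L)
      = 16 * Q * L * (∑ t ∈ Finset.Icc 1 T, (1/8:ℝ) ^ (t-1)) := by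
        rw [Finset.mul_sum]; apply Finset.sum_congr rfl; intros; ring
    _ ≤ 16 * Q * L * (8/7) := by
        apply mul_le_mul_of_nonneg_left hgeom (by positivity)
    _ ≤ 96 / 5 * Q * L := by nlinarith [mul_nonneg hQ0 hL0]
end
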